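/- For every g : {0,1}^d → {0,1}, the function f is 4-Lipschitz on [0,1]^d (with respect to the Euclidean metric), takes values in [0,1], and satisfies f(x) = g(z) for every z ∈ {0,1}^d and every x ∈ A_z; in particular f agrees with g on {0,1}^d. -/

import Mathlib

noncomputable section

/-- Boolean bit as a real number. -/
def bR (b : Bool) : ℝ := if b then 1 else 0

/-- The unit cube `[0,1]^d` inside Euclidean space. -/
def cube (d : ℕ) : Set (EuclideanSpace ℝ (Fin d)) := {x | ∀ i, x i ∈ Set.Icc (0:ℝ) 1}

/-- `A_z = {x ∈ [0,1]^d : |x_i − z_i| ≤ 1/4 for all i}`. -/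
def Az {d : ℕ} (z : Fin d → Bool) : Set (EuclideanSpace ℝ (Fin d)) :=
  {x | ∀ i, x i ∈ Set.Icc (0:ℝ) 1 ∧ |x i - bR (z i)| ≤ 1/4}

/-- Given `g : {0,1}^d → {0,1}`, the associated real function
`f(x) = Σ_{z∈{0,1}^d} g(z)·max(0, 1 − 4·dist(x, A_z))` (Euclidean distance to `A_z`). -/
def fg {d : ℕ} (g : (Fin d → Bool) → Bool) (x : EuclideanSpace ℝ (Fin d)) : ℝ :=
  ∑ z : Fin d → Bool, bR (g z) * max 0 (1 - 4 * Metric.infDist x (Az z))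

/-- A vector of `ℝ^d` viewed as a point of Euclidean space. -/
def toEuc {d : ℕ} (x : Fin d → ℝ) : EuclideanSpace ℝ (Fin d) := WithLp.toLp 2 x

/-! Two distinct cubes `A_z`, `A_z'` lie on opposite sides of the slab `1/4 < x_i < 3/4` for a
coordinate `i` where `z` and `z'` differ, so they are at distance at least `1/2` and at most one
bump `max(0, 1 − 4·dist(x, A_z))` is nonzero at any point. Hence `f` coincides pointwise with a
single term `g(z)·max(0, 1 − 4·dist(x, A_z))`, which is `4`-Lipschitz (since `dist(·, A_z)` is
`1`-Lipschitz), has values in `[0,1]` and equals `g(z)` on `A_z`. -/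

open Metric

lemma bR_nonneg (b : Bool) : 0 ≤ bR b := by
  cases b <;> simp [bR]

lemma bR_le_one (b : Bool) : bR b ≤ 1 := by
  cases b <;> simp [bR]

section Tent

variable {α : Type*} [PseudoMetricSpace α]

def tent (s : Set α) (x : α) : ℝ := max 0 (1 - 4 * infDist x s)

lemma tent_nonneg (s : Set α) (x : α) : 0 ≤ tent s x :=
  le_max_left _ _

lemma tent_le_one (s : Set α) (x : α) : tent s x ≤ 1 :=
  max_le zero_le_one (by linarith [infDist_nonneg (x := x) (s := s)])

lemma tent_of_mem {s : Set α} {x : α} (hx : x ∈ s) : tent s x = 1 := by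
  simp [tent, infDist_zero_of_mem hx]

lemma infDist_lt_of_tent_ne_zero {s : Set α} {x : α} (h : tent s x ≠ 0) :
    infDist x s < 1 / 4 := by
  by_contra! hle
  exact h (max_eq_left (by linarith))

lemma lipschitzWith_tent (s : Set α) : LipschitzWith 4 (tent s) :=
  LipschitzWith.of_le_add_mul 4 fun x y => by
    have hxy := infDist_le_infDist_add_dist (x := y) (y := x) (s := s)
    rw [dist_comm] at hxy
    have h0 := dist_nonneg (x := x) (y := y)
    have h1 : 0 ≤ tent s y := tent_nonneg s y
    have h2 : 1 - 4 * infDist y s ≤ tent s y := le_max_right _ _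
    push_cast
    apply max_le <;> linarith

lemma lipschitzWith_bR_mul_tent (b : Bool) (s : Set α) :
    LipschitzWith 4 fun x => bR b * tent s x := by
  cases b
  · simpa [bR] using LipschitzWith.const' (α := α) (K := 4) (0 : ℝ)
  · simpa [bR] using lipschitzWith_tent s

end Tent

section DisjointSupports

variable {ι α : Type*} [Fintype ι] {f : ι → α → ℝ}

lemma sum_eq_of_support_subsingleton {x : α} (hf : {i | f i x ≠ 0}.Subsingleton)
    {i : ι} (hi : f i x ≠ 0) : ∑ j, f j x = f i x :=
  Finset.sum_eq_single_of_mem i (Finset.mem_univ i) fun j _ hji => by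
    by_contra hj
    exact hji (hf hj hi)

lemma sum_le_of_support_subsingleton {x : α} (hf : {i | f i x ≠ 0}.Subsingleton)
    {c : ℝ} (hc : 0 ≤ c) (hle : ∀ i, f i x ≤ c) : ∑ i, f i x ≤ c := by
  by_cases h : ∃ i, f i x ≠ 0
  · obtain ⟨i, hi⟩ := h
    rw [sum_eq_of_support_subsingleton hf hi]
    exact hle i
  · push Not at h
    simpa [h] using hc

lemma LipschitzWith.sum_of_support_subsingleton [PseudoMetricSpace α] {K : NNReal}
    (hK : ∀ i, LipschitzWith K (f i)) (hnonneg : ∀ i x, 0 ≤ f i x)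
    (hf : ∀ x, {i | f i x ≠ 0}.Subsingleton) : LipschitzWith K fun x => ∑ i, f i x :=
  LipschitzWith.of_le_add_mul K fun x y => by
    by_cases h : ∃ i, f i x ≠ 0
    · obtain ⟨i, hi⟩ := h
      calc ∑ j, f j x = f i x := sum_eq_of_support_subsingleton (hf x) hi
        _ ≤ f i y + K * dist x y := (hK i).le_add_mul x y
        _ ≤ ∑ j, f j y + K * dist x y := by
          gcongr
          exact Finset.single_le_sum (fun j _ => hnonneg j y) (Finset.mem_univ i)
    · push Not at h
      simp only [h, Finset.sum_const_zero]
      exact add_nonneg (Finset.sum_nonneg fun i _ => hnonneg i y) (by positivity)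

end DisjointSupports

section Cubes

variable {d : ℕ}

lemma fg_eq_sum_tent (g : (Fin d → Bool) → Bool) (x : EuclideanSpace ℝ (Fin d)) :
    fg g x = ∑ z, bR (g z) * tent (Az z) x :=
  rfl

lemma corner_mem_Az (z : Fin d → Bool) : toEuc (fun i => bR (z i)) ∈ Az z := fun i =>
  ⟨⟨bR_nonneg _, bR_le_one _⟩, by simp [toEuc]⟩

lemma abs_sub_bR_le_infDist_Az_add (z : Fin d → Bool) (x : EuclideanSpace ℝ (Fin d)) (i : Fin d) :
    |x i - bR (z i)| ≤ infDist x (Az z) + 1 / 4 := by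
  rw [← sub_le_iff_le_add, le_infDist ⟨_, corner_mem_Az z⟩]
  intro y hy
  have hxy : |x i - y i| ≤ dist x y := by
    simpa [Real.dist_eq] using PiLp.dist_apply_le x y i
  linarith [abs_sub_le (x i) (y i) (bR (z i)), (hy i).2]

lemma half_le_infDist_Az_add_infDist_Az {z z' : Fin d → Bool} (hne : z ≠ z')
    (x : EuclideanSpace ℝ (Fin d)) : 1 / 2 ≤ infDist x (Az z) + infDist x (Az z') := by
  obtain ⟨i, hi⟩ := Function.ne_iff.mp hne
  have hz := abs_sub_bR_le_infDist_Az_add z x i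
  have hz' := abs_sub_bR_le_infDist_Az_add z' x i
  have hbits : |bR (z i) - bR (z' i)| = 1 := by
    cases hzi : z i <;> cases hz'i : z' i <;> simp_all [bR]
  linarith [abs_sub_le (bR (z i)) (x i) (bR (z' i)), abs_sub_comm (bR (z i)) (x i)]

lemma tent_Az_support_subsingleton (x : EuclideanSpace ℝ (Fin d)) :
    {z | tent (Az z) x ≠ 0}.Subsingleton := by
  intro z hz z' hz'
  by_contra hne
  linarith [infDist_lt_of_tent_ne_zero hz, infDist_lt_of_tent_ne_zero hz',
    half_le_infDist_Az_add_infDist_Az hne x]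

lemma fg_eq_of_mem_Az (g : (Fin d → Bool) → Bool) {z : Fin d → Bool}
    {x : EuclideanSpace ℝ (Fin d)} (hx : x ∈ Az z) : fg g x = bR (g z) := by
  have hz : tent (Az z) x ≠ 0 := by simp [tent_of_mem hx]
  rw [fg_eq_sum_tent, Finset.sum_eq_single_of_mem z (Finset.mem_univ z), tent_of_mem hx, mul_one]
  intro z' _ hne
  by_contra h
  exact hne (tent_Az_support_subsingleton x (right_ne_zero_of_mul h) hz)

end Cubes

/-- for every `g : {0,1}^d → {0,1}`, the function `f` is `4`-Lipschitz on
`[0,1]^d` (w.r.t. the Euclidean metric), takes values in `[0,1]`, and satisfies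
`f(x) = g(z)` for every `z ∈ {0,1}^d` and every `x ∈ A_z`; in particular `f` agrees
with `g` on `{0,1}^d`. -/
theorem fg_lipschitz_range_and_agrees (d : ℕ) (g : (Fin d → Bool) → Bool) :
    LipschitzOnWith 4 (fg g) (cube d) ∧
    (∀ x ∈ cube d, fg g x ∈ Set.Icc (0:ℝ) 1) ∧
    (∀ z : Fin d → Bool, ∀ x ∈ Az z, fg g x = bR (g z)) ∧
    (∀ z : Fin d → Bool, fg g (toEuc (fun i => bR (z i))) = bR (g z)) := by
  have hsupp x : {z | bR (g z) * tent (Az z) x ≠ 0}.Subsingleton :=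
    (tent_Az_support_subsingleton x).anti fun _ hz => right_ne_zero_of_mul hz
  have hterm_nonneg z x : 0 ≤ bR (g z) * tent (Az z) x :=
    mul_nonneg (bR_nonneg _) (tent_nonneg _ _)
  refine ⟨?_, fun x _ => ⟨?_, ?_⟩, fun z x hx => fg_eq_of_mem_Az g hx,
    fun z => fg_eq_of_mem_Az g (corner_mem_Az z)⟩
  · exact (LipschitzWith.sum_of_support_subsingleton (fun z => lipschitzWith_bR_mul_tent (g z) _)
      hterm_nonneg hsupp).lipschitzOnWith
  · exact Finset.sum_nonneg fun z _ => hterm_nonneg z x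
  · exact sum_le_of_support_subsingleton (f := fun z x => bR (g z) * tent (Az z) x) (hsupp x)
      zero_le_one fun z => mul_le_one₀ (bR_le_one _) (tent_nonneg _ _) (tent_le_one _ _)

end
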